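/- Assume 0 < p < 1/2 (so p < q). For the traffic-light cycle RRGG (ℓ = 2), the mean of the reflected walk at the end of light cycles converges: lim_{m→∞} E(S_{4m}) = (1/4)·[ -4 + 2(q - p) + 1/(q - p) + √(1 + 4pq) ]. -/

import Mathlib

/-!
Write `u_j(k) = P(S_j ≥ k)` (`queueTail`). Since `X_{j+1}` is independent of `S_j`, the
reflection rule turns into a linear recursion for `u_j`, and over one light cycle
red-red-green-green it reads, for `k ≥ 1`, `u_{4m+4}(k) = ∑ᵢ C(4,i) pⁱ q⁴⁻ⁱ u_{4m}(k + 2 - i)`.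
The sequence `m ↦ u_{4m}(k)` is increasing and bounded by the explicit solution `h`
(`stationaryTail`) of this cycle equation, equal to `1` on `k ≤ 0` and to a combination of two
geometric sequences on `k ≥ 1`, so it has a limit; `h` minus the limit is a nonnegative summable
solution vanishing on `k ≤ 0`, hence zero. Finally `E S_{4m} = ∑_{k ≥ 1} u_{4m}(k)`, and dominated
convergence gives the limit `∑_{k ≥ 1} h(k)`, a sum of two geometric series.
-/

open MeasureTheory ProbabilityTheory Filter Topology

noncomputable section

namespace TrafficQueue

variable {p q : ℝ}

/-- The increment `X i` equals `lightShift i` with probability `p` and `lightShift i - 1` with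
probability `q`. -/
def lightShift (i : ℕ) : ℤ := if i % 4 = 1 ∨ i % 4 = 2 then 1 else 0

/-- The tail of `max (T + ξ) 0`, for `ξ` independent of `T` with `P(ξ = s) = p` and
`P(ξ = s - 1) = q`, in terms of the tail `f` of `T`. -/
def tailStep (p q : ℝ) (s : ℤ) (f : ℤ → ℝ) (k : ℤ) : ℝ :=
  if k ≤ 0 then 1 else p * f (k - s) + q * f (k - s + 1)

def queueTail (p q : ℝ) : ℕ → ℤ → ℝ
  | 0 => fun k => if k ≤ 0 then 1 else 0
  | j + 1 => tailStep p q (lightShift (j + 1)) (queueTail p q j)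

/-- The tail of `T + B - 2` with `B ∼ Binomial(4, p)` independent of `T`, in terms of the tail `f`
of `T`. -/
def cycleStep (p q : ℝ) (f : ℤ → ℝ) (k : ℤ) : ℝ :=
  q ^ 4 * f (k + 2) + 4 * p * q ^ 3 * f (k + 1) + 6 * p ^ 2 * q ^ 2 * f k
    + 4 * p ^ 3 * q * f (k - 1) + p ^ 4 * f (k - 2)

lemma lightShift_add_four (i : ℕ) : lightShift (i + 4) = lightShift i := by
  simp only [lightShift, Nat.add_mod_right]

section TailStep

variable {s k : ℤ} {f g : ℤ → ℝ}

lemma tailStep_of_nonpos (hk : k ≤ 0) : tailStep p q s f k = 1 := if_pos hk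

lemma tailStep_of_pos (hk : 0 < k) : tailStep p q s f k = p * f (k - s) + q * f (k - s + 1) :=
  if_neg (not_le.2 hk)

lemma tailStep_one_apply (hpq : p + q = 1) (hf : ∀ k ≤ 0, f k = 1) (k : ℤ) :
    tailStep p q 1 f k = p * f (k - 1) + q * f k := by
  rcases le_or_gt k 0 with hk | hk
  · rw [tailStep_of_nonpos hk, hf k hk, hf (k - 1) (by omega)]
    linarith
  · rw [tailStep_of_pos hk, sub_add_cancel]

lemma tailStep_mono (hp : 0 ≤ p) (hq : 0 ≤ q) (hfg : f ≤ g) :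
    tailStep p q s f ≤ tailStep p q s g := by
  intro k
  unfold tailStep
  split_ifs
  · exact le_rfl
  · gcongr <;> apply hfg

lemma tailStep_nonneg (hp : 0 ≤ p) (hq : 0 ≤ q) (hf : 0 ≤ f) : 0 ≤ tailStep p q s f := by
  intro k
  unfold tailStep
  split_ifs
  · exact zero_le_one
  · exact add_nonneg (mul_nonneg hp (hf _)) (mul_nonneg hq (hf _))

/-- Red steps never reflect, and a reflected green step ends at `0 < k`, so seen from a level
`k ≥ 1` a red-red-green-green cycle just adds its four increments. -/
lemma tailStep_cycle (hpq : p + q = 1) (hf : ∀ k ≤ 0, f k = 1) (hk : 0 < k) :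
    tailStep p q 0 (tailStep p q 0 (tailStep p q 1 (tailStep p q 1 f))) k = cycleStep p q f k := by
  have hf₁ : ∀ k ≤ 0, tailStep p q 1 f k = 1 := fun k hk => tailStep_of_nonpos hk
  simp only [tailStep_of_pos hk, tailStep_of_pos (show 0 < k + 1 by omega), sub_zero,
    tailStep_one_apply hpq hf₁, tailStep_one_apply hpq hf, cycleStep]
  ring_nf

end TailStep

section QueueTail

lemma queueTail_of_nonpos (j : ℕ) {k : ℤ} (hk : k ≤ 0) : queueTail p q j k = 1 := by
  cases j
  · exact if_pos hk
  · exact tailStep_of_nonpos hk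

lemma queueTail_nonneg (hp : 0 ≤ p) (hq : 0 ≤ q) (j : ℕ) : 0 ≤ queueTail p q j := by
  induction j with
  | zero => intro k; dsimp only [queueTail]; split_ifs <;> norm_num
  | succ j ih => exact tailStep_nonneg hp hq ih

lemma queueTail_zero_le {g : ℤ → ℝ} (hg₀ : ∀ k ≤ 0, 1 ≤ g k) (hg : 0 ≤ g) :
    queueTail p q 0 ≤ g := by
  intro k
  rcases le_or_gt k 0 with hk | hk
  · exact (queueTail_of_nonpos 0 hk).trans_le (hg₀ k hk)
  · simpa [queueTail, not_le.2 hk] using hg k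

lemma queueTail_le_add_four (hp : 0 ≤ p) (hq : 0 ≤ q) (j : ℕ) :
    queueTail p q j ≤ queueTail p q (j + 4) := by
  induction j with
  | zero =>
    exact queueTail_zero_le (fun k hk => (queueTail_of_nonpos 4 hk).ge) (queueTail_nonneg hp hq 4)
  | succ j ih =>
    change tailStep p q _ (queueTail p q j) ≤
      tailStep p q (lightShift (j + 1 + 4)) (queueTail p q (j + 4))
    rw [lightShift_add_four]
    exact tailStep_mono hp hq ih

lemma monotone_queueTail_four_mul (hp : 0 ≤ p) (hq : 0 ≤ q) :
    Monotone fun m => queueTail p q (4 * m) :=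
  monotone_nat_of_le_succ fun m => by
    simpa only [mul_add, mul_one] using queueTail_le_add_four hp hq (4 * m)

lemma queueTail_four_mul_succ (hpq : p + q = 1) (m : ℕ) {k : ℤ} (hk : 0 < k) :
    queueTail p q (4 * (m + 1)) k = cycleStep p q (queueTail p q (4 * m)) k := by
  have hshift : ∀ i < 4, lightShift (4 * m + (i + 1)) = if i < 2 then 1 else 0 := by
    intro i hi
    interval_cases i <;> simp [lightShift, Nat.add_mod]
  rw [← tailStep_cycle hpq (fun k hk => queueTail_of_nonpos _ hk) hk]
  simp only [show 4 * (m + 1) = 4 * m + (3 + 1) by ring, queueTail, hshift 3 (by norm_num),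
    hshift 2 (by norm_num), hshift 1 (by norm_num), hshift 0 (by norm_num)]
  rfl

end QueueTail

section CycleStep

variable {f g : ℤ → ℝ}

lemma cycleStep_mono (hp : 0 ≤ p) (hq : 0 ≤ q) (hfg : f ≤ g) (k : ℤ) :
    cycleStep p q f k ≤ cycleStep p q g k := by
  unfold cycleStep
  gcongr <;> apply hfg

lemma pow_four_mul_le_cycleStep (hp : 0 ≤ p) (hq : 0 ≤ q) (hf : 0 ≤ f) (k : ℤ) :
    q ^ 4 * f (k + 2) ≤ cycleStep p q f k := by
  unfold cycleStep
  linarith [mul_nonneg (by positivity : (0 : ℝ) ≤ 4 * p * q ^ 3) (hf (k + 1)),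
    mul_nonneg (by positivity : (0 : ℝ) ≤ 6 * p ^ 2 * q ^ 2) (hf k),
    mul_nonneg (by positivity : (0 : ℝ) ≤ 4 * p ^ 3 * q) (hf (k - 1)),
    mul_nonneg (by positivity : (0 : ℝ) ≤ p ^ 4) (hf (k - 2))]

lemma cycleStep_sub (k : ℤ) : cycleStep p q (f - g) k = cycleStep p q f k - cycleStep p q g k := by
  simp only [cycleStep, Pi.sub_apply]
  ring

lemma cycleStep_add (k : ℤ) : cycleStep p q (f + g) k = cycleStep p q f k + cycleStep p q g k := by
  simp only [cycleStep, Pi.add_apply]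
  ring

lemma cycleStep_const_mul_zpow {r : ℝ} (hr : r ≠ 0) (c : ℝ) (k : ℤ) :
    cycleStep p q (fun k => c * r ^ k) k = c * r ^ k * (r ^ 2)⁻¹ * (q * r + p) ^ 4 := by
  simp only [cycleStep, zpow_add₀ hr, zpow_sub₀ hr]
  field_simp
  ring

lemma continuous_cycleStep (k : ℤ) : Continuous fun f : ℤ → ℝ => cycleStep p q f k := by
  unfold cycleStep
  fun_prop

lemma hasSum_cycleStep {a : ℝ} (hf : HasSum f a) : HasSum (cycleStep p q f) ((p + q) ^ 4 * a) := by
  have shift : ∀ c : ℤ, HasSum (fun k => f (k + c)) a := fun c => (Equiv.addRight c).hasSum_iff.2 hf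
  have hterms := (((((shift 2).mul_left (q ^ 4)).add ((shift 1).mul_left (4 * p * q ^ 3))).add
    ((shift 0).mul_left (6 * p ^ 2 * q ^ 2))).add ((shift (-1)).mul_left (4 * p ^ 3 * q))).add
    ((shift (-2)).mul_left (p ^ 4))
  rw [show (p + q) ^ 4 * a = q ^ 4 * a + 4 * p * q ^ 3 * a + 6 * p ^ 2 * q ^ 2 * a
    + 4 * p ^ 3 * q * a + p ^ 4 * a by ring]
  exact hterms.congr_fun fun k => by simp only [cycleStep, add_zero, sub_eq_add_neg]

/-- Summing the equation over `ℤ` shows that it holds at every `k`, not only at `k > 0`; at `k - 2`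
it then gives `q ^ 4 * f k ≤ f (k - 2)`. -/
lemma eq_zero_of_cycleStep_eq (hp : 0 ≤ p) (hq : 0 < q) (hpq : p + q = 1)
    (hf₀ : ∀ k ≤ 0, f k = 0) (hf : 0 ≤ f) (hsum : Summable fun n : ℕ => f n)
    (hfix : ∀ k, 0 < k → cycleStep p q f k = f k) : f = 0 := by
  have hsumℤ : Summable f := summable_int_iff_summable_nat_and_neg.2
    ⟨hsum, summable_zero.congr fun n => (hf₀ (-n) (by omega)).symm⟩
  have hexcess : cycleStep p q f - f = 0 := by
    refine (hasSum_zero_iff_of_nonneg (L := .unconditional ℤ) fun k => ?_).1 ?_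
    · rcases le_or_gt k 0 with hk | hk
      · simpa [hf₀ k hk] using (pow_four_mul_le_cycleStep hp hq.le hf k).trans'
          (mul_nonneg (by positivity) (hf (k + 2)))
      · simp [hfix k hk]
    · have := (hasSum_cycleStep (p := p) (q := q) hsumℤ.hasSum).sub hsumℤ.hasSum
      rwa [hpq, one_pow, one_mul, sub_self] at this
  have hstep : ∀ k, q ^ 4 * f (k + 2) ≤ f k := fun k => by
    simpa [sub_eq_zero.1 (congrFun hexcess k)] using pow_four_mul_le_cycleStep hp hq.le hf k
  have hle : ∀ n : ℕ, ∀ k : ℤ, k ≤ n → f k = 0 := by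
    intro n
    induction n with
    | zero => exact hf₀
    | succ n ih =>
      intro k hk
      rcases (show k ≤ n ∨ k = n + 1 by omega) with hk | rfl
      · exact ih k hk
      · have := hstep (n - 1)
        rw [ih (n - 1) (by omega), show (n : ℤ) - 1 + 2 = n + 1 by ring] at this
        exact le_antisymm (nonpos_of_mul_nonpos_right this (by positivity)) (hf _)
  funext k
  exact hle k.toNat k (Int.self_le_toNat k)

end CycleStep

section StationaryTail

/-- The roots of `(q r + p) ^ 4 = r ^ 2` inside the unit disc: `tailRoot₁` solves
`(q r + p) ^ 2 = r` (whose other root is `1`) and `tailRoot₂` solves `(q r + p) ^ 2 = -r`. -/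
def tailRoot₁ (p q : ℝ) : ℝ := (p / q) ^ 2

def tailRoot₂ (p q : ℝ) : ℝ := (√(1 + 4 * p * q) - (1 + 2 * p * q)) / (2 * q ^ 2)

/-- Chosen so that `geomTail p q 0 = geomTail p q (-1) = 1`. -/
def tailWeight (p q : ℝ) : ℝ := (1 + (q - p) * √(1 + 4 * p * q)) / (4 * q ^ 2)

def geomTail (p q : ℝ) (k : ℤ) : ℝ :=
  tailWeight p q * tailRoot₁ p q ^ k + (1 - tailWeight p q) * tailRoot₂ p q ^ k

def stationaryTail (p q : ℝ) (k : ℤ) : ℝ := if k ≤ 0 then 1 else geomTail p q k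

lemma tailRoot₁_pos (hp : 0 < p) (hq : 0 < q) : 0 < tailRoot₁ p q := by
  unfold tailRoot₁; positivity

lemma tailRoot₁_lt_one (hp : 0 < p) (hpq : p < q) : tailRoot₁ p q < 1 := by
  have hq : 0 < q := hp.trans hpq
  unfold tailRoot₁
  exact pow_lt_one₀ (by positivity) ((div_lt_one hq).2 hpq) two_ne_zero

lemma tailRoot₂_neg (hp : 0 < p) (hq : 0 < q) : tailRoot₂ p q < 0 := by
  have hlt : √(1 + 4 * p * q) < 1 + 2 * p * q :=
    (Real.sqrt_lt' (by positivity)).2 (by nlinarith [mul_pos hp hq])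
  exact div_neg_of_neg_of_pos (by linarith) (by positivity)

lemma abs_tailRoot₂_le (hp : 0 < p) (hq : 0 < q) (hsum : p + q = 1) :
    |tailRoot₂ p q| ≤ tailRoot₁ p q := by
  obtain rfl : q = 1 - p := by linarith
  have hle : 1 + 2 * p * (1 - p) - 2 * p ^ 2 ≤ √(1 + 4 * p * (1 - p)) :=
    Real.le_sqrt_of_sq_le (by nlinarith [pow_pos hp 3])
  rw [abs_of_neg (tailRoot₂_neg hp hq), tailRoot₁, tailRoot₂, div_pow, neg_div',
    div_le_div_iff₀ (by positivity) (by positivity)]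
  nlinarith

lemma half_le_tailWeight (hp : 0 < p) (hpq : p < q) (hsum : p + q = 1) :
    1 / 2 ≤ tailWeight p q := by
  have hq : 0 < q := hp.trans hpq
  have hs : 1 ≤ √(1 + 4 * p * q) := Real.le_sqrt_of_sq_le (by nlinarith)
  rw [tailWeight, le_div_iff₀ (by positivity)]
  nlinarith

lemma tailRoot₁_charpoly (hq : q ≠ 0) (hsum : p + q = 1) :
    (q * tailRoot₁ p q + p) ^ 4 = tailRoot₁ p q ^ 2 := by
  have : q * tailRoot₁ p q + p = p / q := by
    rw [tailRoot₁]; field_simp; linear_combination p * hsum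
  rw [this, tailRoot₁]; ring

lemma tailRoot₂_charpoly (hp : 0 ≤ p) (hq : 0 < q) :
    (q * tailRoot₂ p q + p) ^ 4 = tailRoot₂ p q ^ 2 := by
  have hs := Real.sq_sqrt (show 0 ≤ 1 + 4 * p * q by positivity)
  have hsq : (q * tailRoot₂ p q + p) ^ 2 = -tailRoot₂ p q := by
    rw [tailRoot₂]
    set s := √(1 + 4 * p * q)
    field_simp
    linear_combination hs
  rw [show (4 : ℕ) = 2 * 2 from rfl, pow_mul, hsq, neg_sq]

lemma geomTail_neg_one (hp : 0 < p) (hq : 0 < q) (hsum : p + q = 1) : geomTail p q (-1) = 1 := by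
  have hs := Real.sq_sqrt (show 0 ≤ 1 + 4 * p * q by positivity)
  have h₁ := (tailRoot₁_pos hp hq).ne'
  have h₂ := (tailRoot₂_neg hp hq).ne
  obtain rfl : q = 1 - p := by linarith
  rw [geomTail, zpow_neg_one, zpow_neg_one]
  field_simp
  rw [tailWeight, tailRoot₁, tailRoot₂] at *
  set s := √(1 + 4 * p * (1 - p))
  field_simp
  linear_combination (1 - 2 * p) * hs

lemma cycleStep_geomTail (hp : 0 < p) (hq : 0 < q) (hsum : p + q = 1) (k : ℤ) :
    cycleStep p q (geomTail p q) k = geomTail p q k := by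
  have h₁ := (tailRoot₁_pos hp hq).ne'
  have h₂ := (tailRoot₂_neg hp hq).ne
  have hsplit : geomTail p q = (fun k : ℤ => tailWeight p q * tailRoot₁ p q ^ k)
      + fun k : ℤ => (1 - tailWeight p q) * tailRoot₂ p q ^ k := rfl
  rw [hsplit, cycleStep_add, cycleStep_const_mul_zpow h₁, cycleStep_const_mul_zpow h₂,
    tailRoot₁_charpoly hq.ne' hsum, tailRoot₂_charpoly hp.le hq]
  field_simp
  rfl

lemma stationaryTail_eq_geomTail (hp : 0 < p) (hq : 0 < q) (hsum : p + q = 1) {k : ℤ}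
    (hk : -1 ≤ k) : stationaryTail p q k = geomTail p q k := by
  unfold stationaryTail
  split_ifs with hk'
  · obtain rfl | rfl : k = -1 ∨ k = 0 := by omega
    · exact (geomTail_neg_one hp hq hsum).symm
    · simp [geomTail]
  · rfl

lemma cycleStep_stationaryTail (hp : 0 < p) (hq : 0 < q) (hsum : p + q = 1) {k : ℤ} (hk : 0 < k) :
    cycleStep p q (stationaryTail p q) k = stationaryTail p q k := by
  have h := cycleStep_geomTail hp hq hsum k
  unfold cycleStep at h ⊢
  have e : ∀ j, -1 ≤ j → stationaryTail p q j = geomTail p q j :=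
    fun j hj => stationaryTail_eq_geomTail hp hq hsum hj
  rwa [e (k + 2) (by omega), e (k + 1) (by omega), e k (by omega), e (k - 1) (by omega),
    e (k - 2) (by omega)]

lemma stationaryTail_nonneg (hp : 0 < p) (hpq : p < q) (hsum : p + q = 1) :
    0 ≤ stationaryTail p q := by
  have hq : 0 < q := hp.trans hpq
  intro k
  rw [Pi.zero_apply, stationaryTail]
  split_ifs with hk
  · exact zero_le_one
  lift k to ℕ using by omega
  have hw := half_le_tailWeight hp hpq hsum
  have hcoef : |1 - tailWeight p q| ≤ tailWeight p q := abs_le.2 ⟨by linarith, by linarith⟩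
  have hpow : |tailRoot₂ p q| ^ k ≤ tailRoot₁ p q ^ k :=
    pow_le_pow_left₀ (abs_nonneg _) (abs_tailRoot₂_le hp hq hsum) k
  have : |(1 - tailWeight p q) * tailRoot₂ p q ^ k| ≤ tailWeight p q * tailRoot₁ p q ^ k := by
    rw [abs_mul, abs_pow]
    exact mul_le_mul hcoef hpow (by positivity) (by linarith)
  simp only [geomTail, zpow_natCast]
  linarith [neg_abs_le ((1 - tailWeight p q) * tailRoot₂ p q ^ k)]

lemma hasSum_stationaryTail (hp : 0 < p) (hpq : p < q) (hsum : p + q = 1) :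
    HasSum (fun n : ℕ => stationaryTail p q (n + 1))
      (1 / 4 * (-4 + 2 * (q - p) + 1 / (q - p) + √(1 + 4 * p * q))) := by
  have hq : 0 < q := hp.trans hpq
  have h₁ := tailRoot₁_pos hp hq
  have h₁' := tailRoot₁_lt_one hp hpq
  have h₂ := tailRoot₂_neg hp hq
  have h₂' : |tailRoot₂ p q| < 1 := (abs_tailRoot₂_le hp hq hsum).trans_lt h₁'
  have hterm : ∀ n : ℕ, stationaryTail p q (n + 1)
      = tailWeight p q * tailRoot₁ p q * tailRoot₁ p q ^ n
        + (1 - tailWeight p q) * tailRoot₂ p q * tailRoot₂ p q ^ n := by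
    intro n
    rw [stationaryTail_eq_geomTail hp hq hsum (by omega), geomTail, ← Nat.cast_succ, zpow_natCast,
      zpow_natCast, pow_succ, pow_succ]
    ring
  have hval : tailWeight p q * tailRoot₁ p q * (1 - tailRoot₁ p q)⁻¹
      + (1 - tailWeight p q) * tailRoot₂ p q * (1 - tailRoot₂ p q)⁻¹
      = 1 / 4 * (-4 + 2 * (q - p) + 1 / (q - p) + √(1 + 4 * p * q)) := by
    have h₁ne : (1 : ℝ) - tailRoot₁ p q ≠ 0 := by linarith
    have h₂ne : (1 : ℝ) - tailRoot₂ p q ≠ 0 := by linarith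
    have : q - p ≠ 0 := by linarith
    rw [← div_eq_mul_inv, ← div_eq_mul_inv, div_add_div _ _ h₁ne h₂ne,
      div_eq_iff (mul_ne_zero h₁ne h₂ne), tailWeight, tailRoot₁, tailRoot₂]
    obtain rfl : q = 1 - p := by linarith
    field_simp
    ring
  rw [← hval]
  exact (((hasSum_geometric_of_lt_one h₁.le h₁').mul_left _).add
    ((hasSum_geometric_of_abs_lt_one h₂').mul_left _)).congr_fun hterm

end StationaryTail

section Convergence

lemma queueTail_le_stationaryTail (hp : 0 < p) (hpq : p < q) (hsum : p + q = 1) (m : ℕ) :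
    queueTail p q (4 * m) ≤ stationaryTail p q := by
  have hq : 0 < q := hp.trans hpq
  induction m with
  | zero =>
    exact queueTail_zero_le (fun k hk => (if_pos hk).ge) (stationaryTail_nonneg hp hpq hsum)
  | succ m ih =>
    intro k
    rcases le_or_gt k 0 with hk | hk
    · rw [queueTail_of_nonpos _ hk, stationaryTail, if_pos hk]
    rw [queueTail_four_mul_succ hsum m hk, ← cycleStep_stationaryTail hp hq hsum hk]
    exact cycleStep_mono hp.le hq.le ih k

lemma tendsto_queueTail_stationaryTail (hp : 0 < p) (hpq : p < q) (hsum : p + q = 1) (k : ℤ) :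
    Tendsto (fun m => queueTail p q (4 * m) k) atTop (𝓝 (stationaryTail p q k)) := by
  have hq : 0 < q := hp.trans hpq
  have hle := queueTail_le_stationaryTail hp hpq hsum
  have hconv : ∀ k, ∃ L, Tendsto (fun m => queueTail p q (4 * m) k) atTop (𝓝 L) := fun k =>
    ⟨_, tendsto_atTop_ciSup (fun _ _ h => monotone_queueTail_four_mul hp.le hq.le h k)
      ⟨stationaryTail p q k, by rintro _ ⟨m, rfl⟩; exact hle m k⟩⟩
  choose L hL using hconv
  suffices stationaryTail p q = L by rw [this]; exact hL k
  have hL₀ : ∀ k ≤ 0, L k = 1 := fun k hk =>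
    tendsto_nhds_unique (hL k) (by simp only [queueTail_of_nonpos _ hk]; exact tendsto_const_nhds)
  have hLnn : 0 ≤ L := fun k => ge_of_tendsto' (hL k) fun m => queueTail_nonneg hp.le hq.le _ k
  have hLle : L ≤ stationaryTail p q := fun k => le_of_tendsto' (hL k) fun m => hle m k
  have hLfix : ∀ k, 0 < k → cycleStep p q L k = L k := fun k hk =>
    tendsto_nhds_unique (((continuous_cycleStep k).tendsto L).comp (tendsto_pi_nhds.2 hL))
      (((hL k).comp (tendsto_add_atTop_nat 1)).congr fun m => queueTail_four_mul_succ hsum m hk)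
  have hsum_nat : Summable fun n : ℕ => stationaryTail p q n :=
    (summable_nat_add_iff 1).1 <| by
      simpa only [Nat.cast_add, Nat.cast_one] using (hasSum_stationaryTail hp hpq hsum).summable
  refine sub_eq_zero.1 (eq_zero_of_cycleStep_eq hp.le hq hsum ?_ (sub_nonneg.2 hLle) ?_ ?_)
  · intro k hk
    simp [hL₀ k hk, stationaryTail, hk]
  · exact hsum_nat.of_nonneg_of_le (fun n => sub_nonneg.2 (hLle n))
      fun n => sub_le_self _ (hLnn n)
  · intro k hk
    rw [cycleStep_sub, cycleStep_stationaryTail hp hq hsum hk, hLfix k hk]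
    rfl

lemma tendsto_tsum_queueTail (hp : 0 < p) (hpq : p < q) (hsum : p + q = 1) :
    Tendsto (fun m => ∑' n : ℕ, queueTail p q (4 * m) (n + 1)) atTop
      (𝓝 (1 / 4 * (-4 + 2 * (q - p) + 1 / (q - p) + √(1 + 4 * p * q)))) := by
  have hq : 0 < q := hp.trans hpq
  rw [← (hasSum_stationaryTail hp hpq hsum).tsum_eq]
  refine tendsto_tsum_of_dominated_convergence (hasSum_stationaryTail hp hpq hsum).summable
    (fun n => tendsto_queueTail_stationaryTail hp hpq hsum _) (Eventually.of_forall fun m n => ?_)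
  rw [Real.norm_of_nonneg (queueTail_nonneg hp.le hq.le _ _)]
  exact queueTail_le_stationaryTail hp hpq hsum m _

end Convergence

section ReflectedWalk

variable {Ω : Type*} {X S : ℕ → Ω → ℤ}

lemma measurable_past_reflectedWalk (hS₀ : ∀ ω, S 0 ω = 0)
    (hS : ∀ j ω, S (j + 1) ω = max (S j ω + X (j + 1) ω) 0) (j : ℕ) :
    Measurable[⨆ i ∈ Set.Iic j, MeasurableSpace.comap (X i) inferInstance] (S j) := by
  induction j with
  | zero => simp only [funext hS₀]; exact measurable_const
  | succ j ih =>
    rw [show S (j + 1) = (fun z : ℤ × ℤ => max (z.1 + z.2) 0) ∘ fun ω => (S j ω, X (j + 1) ω) from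
      funext (hS j)]
    refine (measurable_of_countable _).comp (Measurable.prodMk ?_ ?_)
    · exact ih.mono (biSup_mono fun i hi => Set.mem_Iic.2 (Nat.le_succ_of_le hi)) le_rfl
    · exact (comap_measurable (X (j + 1))).mono (le_iSup₂
        (f := fun i (_ : i ∈ Set.Iic (j + 1)) => MeasurableSpace.comap (X i) inferInstance)
        (j + 1) (Set.mem_Iic.2 le_rfl)) le_rfl

lemma reflectedWalk_nonneg (hS₀ : ∀ ω, S 0 ω = 0)
    (hS : ∀ j ω, S (j + 1) ω = max (S j ω + X (j + 1) ω) 0) (j : ℕ) (ω : Ω) : 0 ≤ S j ω := by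
  cases j
  · exact (hS₀ ω).ge
  · exact (hS _ ω).symm ▸ le_max_right _ _

variable [MeasurableSpace Ω] {μ : Measure Ω}

lemma measurable_reflectedWalk (hX : ∀ i, Measurable (X i)) (hS₀ : ∀ ω, S 0 ω = 0)
    (hS : ∀ j ω, S (j + 1) ω = max (S j ω + X (j + 1) ω) 0) (j : ℕ) : Measurable (S j) :=
  (measurable_past_reflectedWalk hS₀ hS j).mono (iSup₂_le fun i _ => (hX i).comap_le) le_rfl

lemma integral_eq_tsum_measureReal_le [IsFiniteMeasure μ] {N : Ω → ℤ} (hN : Measurable N)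
    (hN₀ : ∀ ω, 0 ≤ N ω) : ∫ ω, (N ω : ℝ) ∂μ = ∑' n : ℕ, μ.real {ω | (n : ℤ) + 1 ≤ N ω} := by
  have hlevel : ∀ n : ℕ, MeasurableSet {ω | (n : ℤ) + 1 ≤ N ω} := fun n => hN measurableSet_Ici
  have hcount : ∀ ω, ENNReal.ofReal (N ω) = ∑' n : ℕ, {ω | (n : ℤ) + 1 ≤ N ω}.indicator 1 ω := by
    intro ω
    obtain ⟨m, hm⟩ := Int.eq_ofNat_of_zero_le (hN₀ ω)
    simp only [Set.indicator_apply, Set.mem_ofPred_eq, hm, Pi.one_apply]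
    rw [tsum_eq_sum (s := Finset.range m) fun n hn => if_neg (by simp at hn; omega),
      Finset.sum_congr rfl fun n hn => if_pos (by simp at hn; omega)]
    simp
  have hmeas : AEStronglyMeasurable (fun ω => (N ω : ℝ)) μ :=
    ((measurable_of_countable (fun z : ℤ => (z : ℝ))).comp hN).aestronglyMeasurable
  rw [integral_eq_lintegral_of_nonneg_ae (ae_of_all _ fun ω => Int.cast_nonneg (hN₀ ω)) hmeas,
    lintegral_congr hcount,
    lintegral_tsum (f := fun n : ℕ => {ω | (n : ℤ) + 1 ≤ N ω}.indicator 1)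
      fun n => (measurable_one.indicator (hlevel n)).aemeasurable]
  simp_rw [lintegral_indicator_one (hlevel _)]
  exact ENNReal.tsum_toReal_eq fun n => measure_ne_top μ _

lemma measureReal_le_add_of_ae_eq_or [IsFiniteMeasure μ] {Y Z : Ω → ℤ} (hY : Measurable Y)
    (hZ : Measurable Z) (hYZ : IndepFun Y Z μ) {a b : ℤ} (hab : a ≠ b)
    (hZab : ∀ᵐ ω ∂μ, Z ω = a ∨ Z ω = b) (k : ℤ) :
    μ.real {ω | k ≤ Y ω + Z ω} = μ.real {ω | Z ω = a} * μ.real {ω | k - a ≤ Y ω}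
      + μ.real {ω | Z ω = b} * μ.real {ω | k - b ≤ Y ω} := by
  have hsplit : {ω | k ≤ Y ω + Z ω} =ᵐ[μ]
      (Y ⁻¹' Set.Ici (k - a) ∩ Z ⁻¹' {a} ∪ Y ⁻¹' Set.Ici (k - b) ∩ Z ⁻¹' {b} : Set Ω) := by
    refine eventuallyEq_set.2 ?_
    filter_upwards [hZab] with ω hω
    rcases hω with h | h <;> simp [h, hab, hab.symm]
  have hdisj : Disjoint (Y ⁻¹' Set.Ici (k - a) ∩ Z ⁻¹' {a}) (Y ⁻¹' Set.Ici (k - b) ∩ Z ⁻¹' {b}) :=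
    Set.disjoint_left.2 fun ω ha hb => hab (ha.2.symm.trans hb.2)
  rw [measureReal_congr hsplit,
    measureReal_union hdisj ((hY measurableSet_Ici).inter (hZ (measurableSet_singleton b))),
    measureReal_def, measureReal_def,
    hYZ.measure_inter_preimage_eq_mul _ _ measurableSet_Ici (measurableSet_singleton a),
    hYZ.measure_inter_preimage_eq_mul _ _ measurableSet_Ici (measurableSet_singleton b),
    ENNReal.toReal_mul, ENNReal.toReal_mul, mul_comm, mul_comm (μ (Y ⁻¹' _)).toReal]
  rfl

lemma indepFun_reflectedWalk (hX : ∀ i, Measurable (X i)) (hXind : iIndepFun X μ)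
    (hS₀ : ∀ ω, S 0 ω = 0) (hS : ∀ j ω, S (j + 1) ω = max (S j ω + X (j + 1) ω) 0) (j : ℕ) :
    IndepFun (S j) (X (j + 1)) μ := by
  have hpast := indep_iSup_of_disjoint (fun i => (hX i).comap_le)
    ((iIndepFun_iff_iIndep _ _ _).1 hXind) (S := Set.Iic j) (T := {j + 1}) (by simp)
  rw [IndepFun_iff_Indep]
  refine indep_of_indep_of_le_right (indep_of_indep_of_le_left hpast
    (measurable_past_reflectedWalk hS₀ hS j).comap_le) ?_
  exact le_iSup₂
    (f := fun i (_ : i ∈ ({j + 1} : Set ℕ)) => MeasurableSpace.comap (X i) inferInstance)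
    (j + 1) rfl

lemma ae_eq_or_eq_of_measure_add_eq_one [IsProbabilityMeasure μ] {Z : Ω → ℤ} (hZ : Measurable Z)
    {a b : ℤ} (hab : a ≠ b) (h : μ {ω | Z ω = a} + μ {ω | Z ω = b} = 1) :
    ∀ᵐ ω ∂μ, Z ω = a ∨ Z ω = b := by
  have hdisj : Disjoint {ω | Z ω = a} {ω | Z ω = b} :=
    Set.disjoint_left.2 fun ω ha hb => hab (ha.symm.trans hb)
  have hmeas : MeasurableSet ({ω | Z ω = a} ∪ {ω | Z ω = b}) :=
    (hZ (measurableSet_singleton a)).union (hZ (measurableSet_singleton b))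
  exact mem_ae_iff.2 <| (prob_compl_eq_zero_iff hmeas).2 <| by
    rw [measure_union hdisj (hZ (measurableSet_singleton b)), h]

lemma measureReal_le_reflectedWalk [IsProbabilityMeasure μ] (hp : 0 ≤ p) (hq : 0 ≤ q)
    (hpq : p + q = 1) (hX : ∀ i, Measurable (X i)) (hXind : iIndepFun X μ)
    (hlaw : ∀ i, 1 ≤ i → μ {ω | X i ω = lightShift i} = ENNReal.ofReal p ∧
      μ {ω | X i ω = lightShift i - 1} = ENNReal.ofReal q)
    (hS₀ : ∀ ω, S 0 ω = 0) (hS : ∀ j ω, S (j + 1) ω = max (S j ω + X (j + 1) ω) 0) (j : ℕ)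
    (k : ℤ) : μ.real {ω | k ≤ S j ω} = queueTail p q j k := by
  induction j generalizing k with
  | zero =>
    by_cases hk : k ≤ 0 <;> simp [hS₀, queueTail, hk]
  | succ j ih =>
    rcases le_or_gt k 0 with hk | hk
    · have huniv : {ω | k ≤ S (j + 1) ω} = Set.univ := Set.eq_univ_of_forall fun ω => by
        simpa only [Set.mem_ofPred_eq, hS j ω] using hk.trans (le_max_right _ _)
      rw [queueTail_of_nonpos _ hk, huniv, probReal_univ]
    obtain ⟨hXs, hXs'⟩ := hlaw (j + 1) (by omega)
    have hae := ae_eq_or_eq_of_measure_add_eq_one (hX (j + 1)) (sub_one_lt _).ne'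
      (by rw [hXs, hXs', ← ENNReal.ofReal_add hp hq, hpq, ENNReal.ofReal_one])
    have hlevel : {ω | k ≤ S (j + 1) ω} = {ω | k ≤ S j ω + X (j + 1) ω} := by
      ext ω; simp only [Set.mem_ofPred_eq, hS j ω, le_max_iff]; omega
    rw [hlevel, measureReal_le_add_of_ae_eq_or (measurable_reflectedWalk hX hS₀ hS j) (hX (j + 1))
      (indepFun_reflectedWalk hX hXind hS₀ hS j) (sub_one_lt _).ne' hae, ih, ih,
      measureReal_def, measureReal_def, hXs, hXs', ENNReal.toReal_ofReal hp,
      ENNReal.toReal_ofReal hq, sub_sub_eq_add_sub, add_sub_right_comm]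
    exact (tailStep_of_pos hk).symm

end ReflectedWalk

end TrafficQueue

open TrafficQueue

/-- For 0 < p < 1/2 and the ℓ = 2 (RRGG-cycle) walk,
E(S_{4m}) → (1/4)[-4 + 2(q-p) + 1/(q-p) + √(1+4pq)]. -/
theorem maxQueue_stationary_mean_ell_two
    (p q : ℝ) (hp : 0 < p) (hpq : p < 1 / 2) (hq : q = 1 - p)
    {Ω : Type*} [MeasurableSpace Ω] (μ : Measure Ω) [IsProbabilityMeasure μ]
    (X : ℕ → Ω → ℤ) (hXmeas : ∀ i, Measurable (X i))
    (hXindep : iIndepFun X μ)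
    (hXred : ∀ i : ℕ, i % 4 = 1 ∨ i % 4 = 2 →
      μ {ω | X i ω = 1} = ENNReal.ofReal p ∧ μ {ω | X i ω = 0} = ENNReal.ofReal q)
    (hXgreen : ∀ i : ℕ, 1 ≤ i → (i % 4 = 3 ∨ i % 4 = 0) →
      μ {ω | X i ω = 0} = ENNReal.ofReal p ∧ μ {ω | X i ω = -1} = ENNReal.ofReal q)
    (S : ℕ → Ω → ℤ) (hS0 : ∀ ω, S 0 ω = 0)
    (hS : ∀ (j : ℕ) (ω : Ω), S (j + 1) ω = max (S j ω + X (j + 1) ω) 0) :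
    Tendsto (fun m : ℕ => ∫ ω, ((S (4 * m) ω : ℤ) : ℝ) ∂μ) atTop
      (nhds (1 / 4 * (-4 + 2 * (q - p) + 1 / (q - p) + Real.sqrt (1 + 4 * p * q)))) := by
  have hsum : p + q = 1 := by linarith
  have hlaw : ∀ i, 1 ≤ i → μ {ω | X i ω = lightShift i} = ENNReal.ofReal p ∧
      μ {ω | X i ω = lightShift i - 1} = ENNReal.ofReal q := by
    intro i hi
    unfold lightShift
    split_ifs with hred
    · exact hXred i hred
    · simpa using hXgreen i hi (by omega)
  have htail := measureReal_le_reflectedWalk hp.le (by linarith) hsum hXmeas hXindep hlaw hS0 hS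
  simp_rw [integral_eq_tsum_measureReal_le (measurable_reflectedWalk hXmeas hS0 hS _)
    (reflectedWalk_nonneg hS0 hS _), htail]
  exact tendsto_tsum_queueTail hp (by linarith) hsum
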